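/- In the non-autonomous conjugation setup, for all integers m, n ≥ 0 and every w ∈ ℂ² with ‖w‖ ≤ s_m: (i) ‖φ_{n+m,m}(w) − h̄_m(w)‖ ≤ (M/(1 − D^k/(λC)))·‖w‖^k, and (ii) ‖φ_{n+m,m}(w)‖ ≤ (M/(1 − D^k/(λC)) + 2)·‖w‖. -/

import Mathlib

open Set Filter Metric Topology

noncomputable section

/-- The radius `r_n = min{(1-λ)C²D^{2n(k-2+ε)}/(2Z), D^{2n(k-2+ε)}/(48Z),
D^{4n(k-2+ε)/(3-k)}/2}`. -/
def rSeq (C D k ε Z lam : ℝ) (n : ℕ) : ℝ :=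
  min (min ((1 - lam) * C ^ 2 * D ^ (2 * (n : ℝ) * (k - 2 + ε)) / (2 * Z))
        (D ^ (2 * (n : ℝ) * (k - 2 + ε)) / (48 * Z)))
      (D ^ (4 * (n : ℝ) * (k - 2 + ε) / (3 - k)) / 2)

/-- `s_n = (M/(1 - D^k/(λC)) + 2)⁻¹ · r_n`. -/
def sSeq (C D k ε Z lam M : ℝ) (n : ℕ) : ℝ :=
  (M / (1 - D ^ k / (lam * C)) + 2)⁻¹ * rSeq C D k ε Z lam n

/-- The map `g(z,w) = (a z, b w + c z + d z²)`. -/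
def gMap (a b c d : ℂ) (z : ℂ × ℂ) : ℂ × ℂ :=
  (a * z.1, b * z.2 + c * z.1 + d * z.1 ^ 2)

/-- A homogeneous quadratic map of ℂ² with coefficient vector `cf`. -/
def quadMap (cf : Fin 6 → ℂ) (z : ℂ × ℂ) : ℂ × ℂ :=
  (cf 0 * z.1 ^ 2 + cf 1 * z.1 * z.2 + cf 2 * z.2 ^ 2,
   cf 3 * z.1 ^ 2 + cf 4 * z.1 * z.2 + cf 5 * z.2 ^ 2)

/-- `h̄_n = id + (homogeneous quadratic with coefficients ch n)`. -/
def hBar (ch : ℕ → Fin 6 → ℂ) (n : ℕ) (z : ℂ × ℂ) : ℂ × ℂ := z + quadMap (ch n) z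

/-- `fComp f m n = f̄_{n,m} = f (n-1) ∘ ⋯ ∘ f m` (the identity if `n ≤ m`). -/
def fComp (f : ℕ → (ℂ × ℂ) → (ℂ × ℂ)) (m : ℕ) : ℕ → (ℂ × ℂ) → (ℂ × ℂ)
  | 0 => id
  | n + 1 => if m ≤ n then f n ∘ fComp f m n else id

/-- `gInvComp gi m n = (ḡ_{n,m})⁻¹ = gi m ∘ ⋯ ∘ gi (n-1)` (the identity if `n ≤ m`). -/
def gInvComp (gi : ℕ → (ℂ × ℂ) → (ℂ × ℂ)) (m : ℕ) : ℕ → (ℂ × ℂ) → (ℂ × ℂ)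
  | 0 => id
  | n + 1 => if m ≤ n then gInvComp gi m n ∘ gi n else id

/-- `φ_{n,m} = ḡ_{n,m}⁻¹ ∘ h̄_n ∘ f̄_{n,m}`. -/
def phiMap (gi : ℕ → (ℂ × ℂ) → (ℂ × ℂ)) (ch : ℕ → Fin 6 → ℂ)
    (f : ℕ → (ℂ × ℂ) → (ℂ × ℂ)) (n m : ℕ) (z : ℂ × ℂ) : ℂ × ℂ :=
  gInvComp gi m n (hBar ch n (fComp f m n z))


/-!
Since `φ_{n+m,m} = ḡ_m⁻¹ ∘ φ_{n+m,m+1} ∘ f̄_m`, the error `φ_{n+m,m} - h̄_m` at `w` is bounded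
by the error at level `m + 1` at the point `f̄_m w`, pulled back through `ḡ_m⁻¹`, plus the one-step
error `M‖w‖^k`. On `B(0, r_m)` the inverse `ḡ_m⁻¹` is `1/(λC)`-Lipschitz: by the Taylor condition
the linear part of `ḡ_m` is `Df̄_m(0)`, which expands by at least `C`, while the quadratic term
`d_m z²` changes distances by at most a factor `1 - λ` there. As `‖f̄_m w‖ ≤ D‖w‖`, the errors
contract by `D^k/(λC) < 1` from one level to the next, and `M/(1 - D^k/(λC))` is the sum of the
geometric series. The bound on `‖φ‖` follows because `‖h̄_m w‖ ≤ 2‖w‖`, and the choice of `s_m`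
keeps every point involved inside the balls `B(0, r_m)`.
-/

theorem norm_quadMap_le {cf : Fin 6 → ℂ} {B : ℝ} (hcf : ∀ i, ‖cf i‖ ≤ B) (z : ℂ × ℂ) :
    ‖quadMap cf z‖ ≤ 3 * B * ‖z‖ ^ 2 := by
  have h1 := norm_fst_le z
  have h2 := norm_snd_le z
  have hB : 0 ≤ B := (norm_nonneg _).trans (hcf 0)
  have row : ∀ i j l : Fin 6,
      ‖cf i * z.1 ^ 2 + cf j * z.1 * z.2 + cf l * z.2 ^ 2‖ ≤ 3 * B * ‖z‖ ^ 2 := fun i j l =>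
    calc _ ≤ ‖cf i‖ * ‖z.1‖ ^ 2 + ‖cf j‖ * ‖z.1‖ * ‖z.2‖ + ‖cf l‖ * ‖z.2‖ ^ 2 :=
          norm_add₃_le.trans_eq (by simp only [norm_mul, norm_pow])
      _ ≤ B * ‖z‖ ^ 2 + B * ‖z‖ * ‖z‖ + B * ‖z‖ ^ 2 := by
          gcongr <;> exact hcf _
      _ = 3 * B * ‖z‖ ^ 2 := by ring
  exact max_le (row 0 1 2) (row 3 4 5)

theorem quadMap_hasFDerivAt_zero (cf : Fin 6 → ℂ) :
    HasFDerivAt (quadMap cf) (0 : (ℂ × ℂ) →L[ℂ] (ℂ × ℂ)) 0 := by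
  have hcf : ∀ i, ‖cf i‖ ≤ ∑ j, ‖cf j‖ := fun i =>
    Finset.single_le_sum (fun j _ => norm_nonneg (cf j)) (Finset.mem_univ i)
  refine Asymptotics.IsBigO.hasFDerivAt (n := 2) ?_ one_lt_two
  exact .of_bound _ (.of_forall fun z => by simpa using norm_quadMap_le hcf z)

theorem hBar_zero (ch : ℕ → Fin 6 → ℂ) (n : ℕ) : hBar ch n 0 = 0 := by
  simp [hBar, quadMap]

theorem hBar_hasFDerivAt_zero (ch : ℕ → Fin 6 → ℂ) (n : ℕ) :
    HasFDerivAt (hBar ch n) (ContinuousLinearMap.id ℂ (ℂ × ℂ)) 0 := by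
  have h := (hasFDerivAt_id (0 : ℂ × ℂ)).add (quadMap_hasFDerivAt_zero (ch n))
  rwa [add_zero] at h

theorem norm_hBar_le {ch : ℕ → Fin 6 → ℂ} {n : ℕ} {B : ℝ} (hch : ∀ i, ‖ch n i‖ ≤ B)
    {z : ℂ × ℂ} (hz : 3 * B * ‖z‖ ≤ 1) : ‖hBar ch n z‖ ≤ 2 * ‖z‖ :=
  calc ‖hBar ch n z‖ ≤ ‖z‖ + 3 * B * ‖z‖ ^ 2 := (norm_add_le _ _).trans (by
        gcongr; exact norm_quadMap_le hch z)
    _ = ‖z‖ + 3 * B * ‖z‖ * ‖z‖ := by ring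
    _ ≤ 2 * ‖z‖ := by nlinarith [norm_nonneg z]

def gMapLin (a b c : ℂ) : (ℂ × ℂ) →L[ℂ] (ℂ × ℂ) :=
  (a • ContinuousLinearMap.fst ℂ ℂ ℂ).prod
    (c • ContinuousLinearMap.fst ℂ ℂ ℂ + b • ContinuousLinearMap.snd ℂ ℂ ℂ)

@[simp]
theorem gMapLin_apply (a b c : ℂ) (z : ℂ × ℂ) :
    gMapLin a b c z = (a * z.1, c * z.1 + b * z.2) := by
  simp [gMapLin]

theorem gMap_sub_gMap (a b c d : ℂ) (p q : ℂ × ℂ) :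
    gMap a b c d p - gMap a b c d q =
      gMapLin a b c (p - q) + (0, d * (p.1 - q.1) * (p.1 + q.1)) := by
  simp only [gMap, gMapLin_apply, Prod.mk_sub_mk, Prod.mk_add_mk, Prod.fst_sub, Prod.snd_sub,
    Prod.ext_iff]
  constructor <;> ring

theorem gMap_hasFDerivAt_zero (a b c d : ℂ) : HasFDerivAt (gMap a b c d) (gMapLin a b c) 0 := by
  have h := (gMapLin a b c).hasFDerivAt.add (quadMap_hasFDerivAt_zero ![0, 0, 0, d, 0, 0])
  have hg : ⇑(gMapLin a b c) + quadMap ![0, 0, 0, d, 0, 0] = gMap a b c d := by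
    ext z <;> simp [gMap, quadMap]; ring
  rwa [add_zero, hg] at h

theorem norm_le_norm_apply_of_hasFDerivAt {𝕜 E F : Type*} [RCLike 𝕜] [NormedAddCommGroup E]
    [NormedSpace 𝕜 E] [NormedAddCommGroup F] [NormedSpace 𝕜 F] {f : E → F} {L : E →L[𝕜] F}
    {x : E} {c : ℝ} (hf : HasFDerivAt f L x)
    (hlow : ∀ᶠ z in 𝓝 x, c * ‖z - x‖ ≤ ‖f z - f x‖) (v : E) : c * ‖v‖ ≤ ‖L v‖ := by
  have hlim := hf.lim v (c := fun n : ℕ => (n : 𝕜)) (l := atTop)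
    (by simpa using tendsto_natCast_atTop_atTop)
  have hclose : Tendsto (fun n : ℕ => x + (n : 𝕜)⁻¹ • v) atTop (𝓝 x) := by
    simpa using tendsto_const_nhds.add ((tendsto_inv_atTop_nhds_zero_nat (𝕜 := 𝕜)).smul_const v)
  refine ge_of_tendsto hlim.norm ?_
  filter_upwards [hclose.eventually hlow, eventually_gt_atTop 0] with n hn hn0
  have hn' : (0 : ℝ) < n := by exact_mod_cast hn0
  simp only [add_sub_cancel_left, norm_smul, norm_inv, RCLike.norm_natCast] at hn ⊢
  calc c * ‖v‖ = n * (c * ((n : ℝ)⁻¹ * ‖v‖)) := by field_simp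
    _ ≤ n * ‖f (x + (n : 𝕜)⁻¹ • v) - f x‖ := by gcongr

theorem norm_le_norm_apply_of_iteratedFDeriv_one_eq {ch : ℕ → Fin 6 → ℂ} {n : ℕ}
    {g f : ℂ × ℂ → ℂ × ℂ} {L : (ℂ × ℂ) →L[ℂ] (ℂ × ℂ)} {C : ℝ} (hg : HasFDerivAt g L 0)
    (hf : DifferentiableAt ℂ f 0) (hf0 : f 0 = 0) (hflow : ∀ z, ‖z‖ < 1 → C * ‖z‖ ≤ ‖f z‖)
    (htaylor : iteratedFDeriv ℂ 1 (g ∘ hBar ch n) 0 =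
      iteratedFDeriv ℂ 1 (hBar ch (n + 1) ∘ f) 0) (v : ℂ × ℂ) :
    C * ‖v‖ ≤ ‖L v‖ := by
  have hgh : HasFDerivAt (g ∘ hBar ch n) L 0 := by
    rw [← hBar_zero ch n] at hg
    simpa using hg.comp 0 (hBar_hasFDerivAt_zero ch n)
  have hhf : HasFDerivAt (hBar ch (n + 1) ∘ f) (fderiv ℂ f 0) 0 := by
    have hh := hBar_hasFDerivAt_zero ch (n + 1)
    rw [← hf0] at hh
    simpa using hh.comp 0 hf.hasFDerivAt
  have hL : L v = fderiv ℂ f 0 v := by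
    simpa [hgh.fderiv, hhf.fderiv] using congrArg (fun T => T fun _ => v) htaylor
  have hlow : ∀ᶠ z in 𝓝 0, C * ‖z - 0‖ ≤ ‖f z - f 0‖ := by
    filter_upwards [ball_mem_nhds (0 : ℂ × ℂ) one_pos] with z hz
    simpa [hf0] using hflow z (mem_ball_zero_iff.1 hz)
  rw [hL]
  exact norm_le_norm_apply_of_hasFDerivAt hf.hasFDerivAt hlow v

theorem norm_gMapLin_sub_le {a b c d : ℂ} {r : ℝ} (ha : a ≠ 0) {p q : ℂ × ℂ}
    (hp : ‖gMap a b c d p‖ ≤ r) (hq : ‖gMap a b c d q‖ ≤ r) :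
    ‖gMapLin a b c (p - q)‖ ≤
      (1 + ‖d‖ * (2 * r) / ‖a‖ ^ 2) * ‖gMap a b c d p - gMap a b c d q‖ := by
  set X := gMap a b c d p
  set Y := gMap a b c d q
  have hdiff : ‖a‖ * ‖p.1 - q.1‖ ≤ ‖X - Y‖ := by
    rw [← norm_mul, mul_sub]
    exact norm_fst_le (X - Y)
  have hsum : ‖a‖ * ‖p.1 + q.1‖ ≤ 2 * r := by
    have hp1 : ‖a * p.1‖ ≤ r := (norm_fst_le X).trans hp
    have hq1 : ‖a * q.1‖ ≤ r := (norm_fst_le Y).trans hq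
    rw [← norm_mul, mul_add]
    linarith [norm_add_le (a * p.1) (a * q.1)]
  have hquad : ‖d * (p.1 - q.1) * (p.1 + q.1)‖ ≤ ‖d‖ * (2 * r) / ‖a‖ ^ 2 * ‖X - Y‖ := by
    rw [norm_mul, norm_mul, div_mul_eq_mul_div, le_div_iff₀ (by positivity)]
    calc ‖d‖ * ‖p.1 - q.1‖ * ‖p.1 + q.1‖ * ‖a‖ ^ 2
        = ‖d‖ * ((‖a‖ * ‖p.1 - q.1‖) * (‖a‖ * ‖p.1 + q.1‖)) := by ring
      _ ≤ ‖d‖ * (‖X - Y‖ * (2 * r)) := by gcongr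
      _ = ‖d‖ * (2 * r) * ‖X - Y‖ := by ring
  calc ‖gMapLin a b c (p - q)‖ = ‖(X - Y) - ((0 : ℂ), d * (p.1 - q.1) * (p.1 + q.1))‖ := by
        rw [gMap_sub_gMap, add_sub_cancel_right]
    _ ≤ ‖X - Y‖ + ‖((0 : ℂ), d * (p.1 - q.1) * (p.1 + q.1))‖ := norm_sub_le _ _
    _ = ‖X - Y‖ + ‖d * (p.1 - q.1) * (p.1 + q.1)‖ := by
        rw [Prod.norm_mk (0 : ℂ), norm_zero, max_eq_right (norm_nonneg _)]
    _ ≤ _ := by rw [add_mul, one_mul]; gcongr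

theorem lam_mul_norm_sub_le_of_rightInverse {g gi f : ℂ × ℂ → ℂ × ℂ} {a b c d : ℂ}
    {ch : ℕ → Fin 6 → ℂ} {n : ℕ} {C lam r : ℝ} (hC : 0 < C) (hlam : 0 < lam) (haC : C ≤ ‖a‖)
    (hdr : ‖d‖ * (2 * r) ≤ (1 - lam) * C ^ 2)
    (hg : g = gMap a b c d ∨ ∃ Mu : (ℂ × ℂ) ≃ₗᵢ[ℂ] (ℂ × ℂ), g = gMap a b c d ∘ Mu)
    (hgi : Function.RightInverse gi g)
    (hf : DifferentiableAt ℂ f 0) (hf0 : f 0 = 0) (hflow : ∀ z, ‖z‖ < 1 → C * ‖z‖ ≤ ‖f z‖)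
    (htaylor : iteratedFDeriv ℂ 1 (g ∘ hBar ch n) 0 =
      iteratedFDeriv ℂ 1 (hBar ch (n + 1) ∘ f) 0)
    {X Y : ℂ × ℂ} (hX : ‖X‖ ≤ r) (hY : ‖Y‖ ≤ r) :
    lam * C * ‖gi X - gi Y‖ ≤ ‖X - Y‖ := by
  obtain ⟨U, rfl⟩ : ∃ U : (ℂ × ℂ) →L[ℂ] (ℂ × ℂ), g = gMap a b c d ∘ U := by
    rcases hg with h | ⟨Mu, h⟩
    exacts [⟨ContinuousLinearMap.id ℂ _, h⟩, ⟨Mu.toContinuousLinearEquiv, h⟩]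
  have hgU : HasFDerivAt (gMap a b c d ∘ U) ((gMapLin a b c).comp U) 0 := by
    have h := gMap_hasFDerivAt_zero a b c d
    rw [← map_zero U] at h
    exact h.comp 0 U.hasFDerivAt
  have hr : 0 ≤ r := (norm_nonneg X).trans hX
  have ha : 0 < ‖a‖ := hC.trans_le haC
  have hdelta : ‖d‖ * (2 * r) / ‖a‖ ^ 2 ≤ 1 - lam :=
    (div_le_div_of_nonneg_left (by positivity) (by positivity) (by gcongr)).trans
      ((div_le_iff₀ (by positivity)).2 hdr)
  have hUX : gMap a b c d (U (gi X)) = X := hgi X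
  have hUY : gMap a b c d (U (gi Y)) = Y := hgi Y
  have hlip : C * ‖gi X - gi Y‖ ≤ (2 - lam) * ‖X - Y‖ :=
    calc C * ‖gi X - gi Y‖ ≤ ‖gMapLin a b c (U (gi X) - U (gi Y))‖ := by
          simpa using norm_le_norm_apply_of_iteratedFDeriv_one_eq hgU hf hf0 hflow htaylor
            (gi X - gi Y)
      _ ≤ (1 + ‖d‖ * (2 * r) / ‖a‖ ^ 2) *
            ‖gMap a b c d (U (gi X)) - gMap a b c d (U (gi Y))‖ :=
          norm_gMapLin_sub_le (norm_pos_iff.1 ha) (by rwa [hUX]) (by rwa [hUY])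
      _ = (1 + ‖d‖ * (2 * r) / ‖a‖ ^ 2) * ‖X - Y‖ := by rw [hUX, hUY]
      _ ≤ (2 - lam) * ‖X - Y‖ := by gcongr; linarith
  -- `λ (2 - λ) ≤ 1`
  nlinarith [mul_le_mul_of_nonneg_left hlip hlam.le,
    mul_nonneg (sq_nonneg (1 - lam)) (norm_nonneg (X - Y))]

theorem fComp_self (f : ℕ → ℂ × ℂ → ℂ × ℂ) (m : ℕ) : fComp f m m = id := by
  cases m with
  | zero => rfl
  | succ m => rw [fComp, if_neg (by omega)]

theorem gInvComp_self (gi : ℕ → ℂ × ℂ → ℂ × ℂ) (m : ℕ) : gInvComp gi m m = id := by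
  cases m with
  | zero => rfl
  | succ m => rw [gInvComp, if_neg (by omega)]

theorem fComp_of_lt (f : ℕ → ℂ × ℂ → ℂ × ℂ) {m N : ℕ} (h : m < N) :
    fComp f m N = fComp f (m + 1) N ∘ f m := by
  induction N with
  | zero => omega
  | succ N ih =>
    rcases Nat.lt_succ_iff_lt_or_eq.1 h with h | rfl
    · rw [fComp, fComp, if_pos h.le, if_pos (Nat.succ_le_of_lt h), ih h]
      rfl
    · rw [fComp, if_pos le_rfl, fComp_self, fComp_self]
      rfl

theorem gInvComp_of_lt (gi : ℕ → ℂ × ℂ → ℂ × ℂ) {m N : ℕ} (h : m < N) :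
    gInvComp gi m N = gi m ∘ gInvComp gi (m + 1) N := by
  induction N with
  | zero => omega
  | succ N ih =>
    rcases Nat.lt_succ_iff_lt_or_eq.1 h with h | rfl
    · rw [gInvComp, gInvComp, if_pos h.le, if_pos (Nat.succ_le_of_lt h), ih h]
      rfl
    · rw [gInvComp, if_pos le_rfl, gInvComp_self, gInvComp_self]
      rfl

theorem phiMap_self (gi : ℕ → ℂ × ℂ → ℂ × ℂ) (ch : ℕ → Fin 6 → ℂ) (f : ℕ → ℂ × ℂ → ℂ × ℂ)
    (m : ℕ) : phiMap gi ch f m m = hBar ch m := by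
  funext w
  simp only [phiMap, fComp_self, gInvComp_self, id]

theorem phiMap_of_lt (gi : ℕ → ℂ × ℂ → ℂ × ℂ) (ch : ℕ → Fin 6 → ℂ) (f : ℕ → ℂ × ℂ → ℂ × ℂ)
    {m N : ℕ} (h : m < N) (w : ℂ × ℂ) :
    phiMap gi ch f N m w = gi m (phiMap gi ch f N (m + 1) (f m w)) := by
  simp only [phiMap, fComp_of_lt f h, gInvComp_of_lt gi h, Function.comp_apply]

theorem norm_le_of_norm_sub_le {x y : ℂ × ℂ} {w : ℂ × ℂ} {K k : ℝ} (hK : 0 ≤ K) (hk : 1 ≤ k)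
    (hw : ‖w‖ ≤ 1) (hxy : ‖x - y‖ ≤ K * ‖w‖ ^ k) (hy : ‖y‖ ≤ 2 * ‖w‖) :
    ‖x‖ ≤ (K + 2) * ‖w‖ :=
  calc ‖x‖ ≤ ‖x - y‖ + ‖y‖ := norm_le_norm_sub_add x y
    _ ≤ K * ‖w‖ + 2 * ‖w‖ := by
        gcongr
        exact hxy.trans (by gcongr; exact Real.rpow_le_self_of_le_one (norm_nonneg w) hw hk)
    _ = (K + 2) * ‖w‖ := by ring

theorem norm_sub_le_of_contraction {E : Type*} [SeminormedAddCommGroup E] {g : E → E}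
    {P Y x : E} {t t' D k Λ M K : ℝ} (hΛ : 0 < Λ) (hK : 0 ≤ K) (hD0 : 0 ≤ D) (hk : 0 ≤ k)
    (hKfix : K * D ^ k / Λ + M ≤ K) (ht : 0 ≤ t) (ht'0 : 0 ≤ t') (ht' : t' ≤ D * t)
    (hg : Λ * ‖g P - g Y‖ ≤ ‖P - Y‖) (hP : ‖P - Y‖ ≤ K * t' ^ k)
    (hx : ‖x - g Y‖ ≤ M * t ^ k) : ‖g P - x‖ ≤ K * t ^ k := by
  have hgP : ‖g P - g Y‖ ≤ K * D ^ k / Λ * t ^ k := by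
    rw [div_mul_eq_mul_div, le_div_iff₀ hΛ, mul_comm]
    calc Λ * ‖g P - g Y‖ ≤ K * t' ^ k := hg.trans hP
      _ ≤ K * (D * t) ^ k := by gcongr
      _ = K * D ^ k * t ^ k := by rw [Real.mul_rpow hD0 ht]; ring
  calc ‖g P - x‖ = ‖(g P - g Y) - (x - g Y)‖ := by rw [sub_sub_sub_cancel_right]
    _ ≤ ‖g P - g Y‖ + ‖x - g Y‖ := norm_sub_le _ _
    _ ≤ K * D ^ k / Λ * t ^ k + M * t ^ k := add_le_add hgP hx
    _ ≤ K * t ^ k := by rw [← add_mul]; gcongr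

theorem phiMap_bounds {gi f : ℕ → ℂ × ℂ → ℂ × ℂ} {ch : ℕ → Fin 6 → ℂ} {s r : ℕ → ℝ}
    {D k Λ M K : ℝ} (hD0 : 0 ≤ D) (hD1 : D ≤ 1) (hk : 1 ≤ k) (hΛ : 0 < Λ) (hK : 0 ≤ K)
    (hKfix : K * D ^ k / Λ + M ≤ K) (hsr : ∀ m, (K + 2) * s m = r m) (hr1 : ∀ m, r m < 1)
    (hrD : ∀ m, D * r m ≤ r (m + 1)) (hf : ∀ m z, ‖z‖ < 1 → ‖f m z‖ ≤ D * ‖z‖)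
    (hh : ∀ m z, ‖z‖ ≤ r m → ‖hBar ch m z‖ ≤ 2 * ‖z‖)
    (hgi : ∀ m X Y, ‖X‖ ≤ r m → ‖Y‖ ≤ r m → Λ * ‖gi m X - gi m Y‖ ≤ ‖X - Y‖)
    (hM : ∀ m z, ‖z‖ ≤ r m → ‖hBar ch m z - gi m (hBar ch (m + 1) (f m z))‖ ≤ M * ‖z‖ ^ k) :
    ∀ m n : ℕ, ∀ w : ℂ × ℂ, ‖w‖ ≤ s m →
      ‖phiMap gi ch f (n + m) m w - hBar ch m w‖ ≤ K * ‖w‖ ^ k ∧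
      ‖phiMap gi ch f (n + m) m w‖ ≤ (K + 2) * ‖w‖ := by
  have hsr_le : ∀ m (w : ℂ × ℂ), ‖w‖ ≤ s m → ‖w‖ ≤ r m := fun m w hw => by
    rw [← hsr]; nlinarith [norm_nonneg w]
  have hsD : ∀ m, D * s m ≤ s (m + 1) := fun m =>
    le_of_mul_le_mul_left (by rw [mul_left_comm, hsr, hsr]; exact hrD m) (by linarith)
  intro m n
  induction n generalizing m with
  | zero =>
    intro w hw
    have h1 : ‖phiMap gi ch f (0 + m) m w - hBar ch m w‖ ≤ K * ‖w‖ ^ k := by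
      rw [Nat.zero_add, phiMap_self, sub_self, norm_zero]
      positivity
    exact ⟨h1, norm_le_of_norm_sub_le hK hk ((hsr_le m w hw).trans (hr1 m).le) h1
      (hh m w (hsr_le m w hw))⟩
  | succ n ih =>
    intro w hw
    have hwr := hsr_le m w hw
    have hw1 : ‖w‖ < 1 := hwr.trans_lt (hr1 m)
    have hfw : ‖f m w‖ ≤ D * ‖w‖ := hf m w hw1
    have hfws : ‖f m w‖ ≤ s (m + 1) := hfw.trans ((by gcongr : D * ‖w‖ ≤ D * s m).trans (hsD m))
    have hfwr : (K + 2) * ‖f m w‖ ≤ r m :=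
      calc (K + 2) * ‖f m w‖ ≤ (K + 2) * (D * s m) := by gcongr; exact hfw.trans (by gcongr)
        _ = D * r m := by rw [← hsr]; ring
        _ ≤ r m := mul_le_of_le_one_left ((norm_nonneg w).trans hwr) hD1
    obtain ⟨ih1, ih2⟩ := ih (m + 1) (f m w) hfws
    have hY : ‖hBar ch (m + 1) (f m w)‖ ≤ r m :=
      (hh (m + 1) _ (hsr_le _ _ hfws)).trans
        ((by nlinarith [norm_nonneg (f m w)] : 2 * ‖f m w‖ ≤ (K + 2) * ‖f m w‖).trans hfwr)
    have h1 : ‖phiMap gi ch f (n + 1 + m) m w - hBar ch m w‖ ≤ K * ‖w‖ ^ k := by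
      rw [show n + 1 + m = n + (m + 1) by omega, phiMap_of_lt gi ch f (by omega) w]
      exact norm_sub_le_of_contraction hΛ hK hD0 (by linarith) hKfix (norm_nonneg _)
        (norm_nonneg _) hfw (hgi m _ _ (ih2.trans hfwr) hY) ih1 (hM m w hwr)
    exact ⟨h1, norm_le_of_norm_sub_le hK hk hw1.le h1 (hh m w hwr)⟩

section Radii

variable {C D k ε Z lam : ℝ}

theorem rpow_neg_two_mul (hD0 : 0 ≤ D) (n : ℕ) (e : ℝ) :
    D ^ (-(2 * (n : ℝ)) * e) = (D ^ (2 * (n : ℝ) * e))⁻¹ := by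
  rw [neg_mul, Real.rpow_neg hD0]

theorem rSeq_lt_one (hD0 : 0 ≤ D) (hD1 : D ≤ 1) (hk2 : 2 < k) (hε0 : 0 < ε)
    (hε : ε < (11 - 5 * k) / 4) (n : ℕ) : rSeq C D k ε Z lam n < 1 := by
  have hexp : 0 ≤ 4 * (n : ℝ) * (k - 2 + ε) / (3 - k) :=
    div_nonneg (by positivity) (by linarith)
  have := Real.rpow_le_one hD0 hD1 hexp
  exact (min_le_right _ _).trans_lt (by linarith)

theorem mul_rSeq_le_rSeq_succ (hD0 : 0 < D) (hD1 : D ≤ 1) (hZ : 0 < Z) (hlam : lam ≤ 1)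
    (hk2 : 2 < k) (hε0 : 0 < ε) (hε : ε < (11 - 5 * k) / 4) (n : ℕ) :
    D * rSeq C D k ε Z lam n ≤ rSeq C D k ε Z lam (n + 1) := by
  have step : ∀ {t a : ℝ}, a ≤ 1 → D * D ^ t ≤ D ^ (t + a) := fun ha => by
    rw [Real.rpow_add hD0, mul_comm]
    gcongr
    exact Real.self_le_rpow_of_le_one hD0.le hD1 ha
  have h2 : 2 * ((n : ℝ) + 1) * (k - 2 + ε) = 2 * n * (k - 2 + ε) + 2 * (k - 2 + ε) := by ring
  have h4 : 4 * ((n : ℝ) + 1) * (k - 2 + ε) / (3 - k) =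
      4 * n * (k - 2 + ε) / (3 - k) + 4 * (k - 2 + ε) / (3 - k) := by ring
  have he2 : 2 * (k - 2 + ε) ≤ 1 := by linarith
  have he4 : 4 * (k - 2 + ε) / (3 - k) ≤ 1 := (div_le_one (by linarith)).2 (by linarith)
  have h1lam : 0 ≤ 1 - lam := by linarith
  simp only [rSeq, Nat.cast_succ, h2, h4]
  rw [mul_min_of_nonneg _ _ hD0.le, mul_min_of_nonneg _ _ hD0.le]
  refine min_le_min (min_le_min ?_ ?_) ?_
  · calc _ = (1 - lam) * C ^ 2 * (D * D ^ (2 * n * (k - 2 + ε))) / (2 * Z) := by ring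
      _ ≤ _ := by gcongr; exact step he2
  · calc _ = D * D ^ (2 * n * (k - 2 + ε)) / (48 * Z) := by ring
      _ ≤ _ := by gcongr; exact step he2
  · calc _ = D * D ^ (4 * n * (k - 2 + ε) / (3 - k)) / 2 := by ring
      _ ≤ _ := by gcongr; exact step he4

theorem norm_mul_two_rSeq_le {x : ℝ} {n : ℕ}
    (hx : x ≤ Z * D ^ (-(2 * (n : ℝ)) * (k - 2 + ε))) (hx0 : 0 ≤ x) (hD0 : 0 < D) (hZ : 0 < Z)
    (hlam : lam ≤ 1) : x * (2 * rSeq C D k ε Z lam n) ≤ (1 - lam) * C ^ 2 := by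
  have h1lam : 0 ≤ 1 - lam := by linarith
  have hA : 0 < D ^ (2 * (n : ℝ) * (k - 2 + ε)) := by positivity
  rw [rpow_neg_two_mul hD0.le] at hx
  have hT : 0 ≤ (1 - lam) * C ^ 2 * D ^ (2 * (n : ℝ) * (k - 2 + ε)) / (2 * Z) :=
    div_nonneg (mul_nonneg (mul_nonneg h1lam (sq_nonneg C)) hA.le) (by positivity)
  calc x * (2 * rSeq C D k ε Z lam n)
      ≤ x * (2 * ((1 - lam) * C ^ 2 * D ^ (2 * (n : ℝ) * (k - 2 + ε)) / (2 * Z))) := by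
        gcongr
        exact (min_le_left _ _).trans (min_le_left _ _)
    _ ≤ Z * (D ^ (2 * (n : ℝ) * (k - 2 + ε)))⁻¹ *
          (2 * ((1 - lam) * C ^ 2 * D ^ (2 * (n : ℝ) * (k - 2 + ε)) / (2 * Z))) := by
        gcongr
    _ = (1 - lam) * C ^ 2 := by field_simp

theorem norm_hBar_le_of_le_rSeq {ch : ℕ → Fin 6 → ℂ} {n : ℕ}
    (hch : ∀ i, ‖ch n i‖ ≤ Z * D ^ (-(2 * (n : ℝ)) * (k - 2 + ε))) (hD0 : 0 < D) (hZ : 0 < Z)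
    {z : ℂ × ℂ} (hz : ‖z‖ ≤ rSeq C D k ε Z lam n) : ‖hBar ch n z‖ ≤ 2 * ‖z‖ := by
  have hA : 0 < D ^ (2 * (n : ℝ) * (k - 2 + ε)) := by positivity
  rw [rpow_neg_two_mul hD0.le] at hch
  refine norm_hBar_le hch ?_
  calc 3 * (Z * (D ^ (2 * (n : ℝ) * (k - 2 + ε)))⁻¹) * ‖z‖
      ≤ 3 * (Z * (D ^ (2 * (n : ℝ) * (k - 2 + ε)))⁻¹) *
          (D ^ (2 * (n : ℝ) * (k - 2 + ε)) / (48 * Z)) := by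
        gcongr
        exact hz.trans ((min_le_left _ _).trans (min_le_right _ _))
    _ ≤ 1 := by field_simp; norm_num

end Radii

theorem phi_approximation_general
    (fb gb gbinv : ℕ → (ℂ × ℂ) → (ℂ × ℂ)) (a b c d : ℕ → ℂ) (ch : ℕ → Fin 6 → ℂ)
    (C D k ε Z lam M : ℝ)
    (hC : 0 < C) (hCD : C < D) (hD : D < 1)
    (hk2 : 2 < k)
    (hε : 0 < ε ∧ ε < min (min ((11 - 5 * k) / 4) ((5 - 2 * k) / 3)) ((3 - k) / 2))
    (hZ : 0 < Z) (hlam : 0 < lam ∧ lam < 1) (hDlam : D ^ k < lam * C)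
    -- the maps f̄ₙ
    (hfhol : ∀ n, AnalyticOn ℂ (fb n) (ball (0 : ℂ × ℂ) 1))
    (hf0 : ∀ n, fb n 0 = 0)
    (hfattr : ∀ n, ∀ z : ℂ × ℂ, ‖z‖ < 1 → C * ‖z‖ ≤ ‖fb n z‖ ∧ ‖fb n z‖ ≤ D * ‖z‖)
    -- the coefficients of gₙ
    (ha : ∀ n, C ≤ ‖a n‖ ∧ ‖a n‖ ≤ D)
    (hd : ∀ n, ‖d n‖ ≤ Z * D ^ (-(2 * (n : ℝ)) * (k - 2 + ε)))
    -- ḡₙ is gₙ or gₙ composed with a unitary matrix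
    (hgb : ∀ n, gb n = gMap (a n) (b n) (c n) (d n) ∨
      ∃ Mu : (ℂ × ℂ) ≃ₗᵢ[ℂ] (ℂ × ℂ), gb n = gMap (a n) (b n) (c n) (d n) ∘ Mu)
    -- ḡₙ⁻¹ is a two-sided inverse of ḡₙ
    (hginv : ∀ n, Function.LeftInverse (gbinv n) (gb n) ∧
      Function.RightInverse (gbinv n) (gb n))
    -- the quadratic coefficients of h̄ₙ
    (hch : ∀ n, ∀ i, ‖ch n i‖ ≤ Z * D ^ (-(2 * (n : ℝ)) * (k - 2 + ε)))
    -- the degree-2 Taylor polynomials of ḡₙ∘h̄ₙ and h̄ₙ₊₁∘f̄ₙ coincide at 0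
    (htaylor : ∀ n, ∀ i : ℕ, i ≤ 2 →
      iteratedFDeriv ℂ i (gb n ∘ hBar ch n) 0 =
        iteratedFDeriv ℂ i (hBar ch (n + 1) ∘ fb n) 0)
    -- M is the one-step comparison constant
    (hM : 0 < M)
    (hMest : ∀ n, ∀ z : ℂ × ℂ, ‖z‖ ≤ rSeq C D k ε Z lam n →
      ‖hBar ch n z - gbinv n (hBar ch (n + 1) (fb n z))‖ ≤ M * ‖z‖ ^ k) :
    ∀ m n : ℕ, ∀ w : ℂ × ℂ, ‖w‖ ≤ sSeq C D k ε Z lam M m →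
      ‖phiMap gbinv ch fb (n + m) m w - hBar ch m w‖
          ≤ M / (1 - D ^ k / (lam * C)) * ‖w‖ ^ k ∧
      ‖phiMap gbinv ch fb (n + m) m w‖
          ≤ (M / (1 - D ^ k / (lam * C)) + 2) * ‖w‖ := by
  obtain ⟨hε0, hε⟩ := hε
  replace hε : ε < (11 - 5 * k) / 4 := hε.trans_le ((min_le_left _ _).trans (min_le_left _ _))
  have hD0 : 0 < D := hC.trans hCD
  have hlamC : 0 < lam * C := mul_pos hlam.1 hC
  have hq : 0 < 1 - D ^ k / (lam * C) := sub_pos.2 ((div_lt_one hlamC).2 hDlam)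
  have hK : 0 ≤ M / (1 - D ^ k / (lam * C)) := div_nonneg hM.le hq.le
  have hKfix : M / (1 - D ^ k / (lam * C)) * D ^ k / (lam * C) + M =
      M / (1 - D ^ k / (lam * C)) := by
    rw [mul_div_assoc]
    generalize D ^ k / (lam * C) = q at hq ⊢
    field_simp
    ring
  refine phiMap_bounds hD0.le hD.le (by linarith) hlamC hK hKfix.le
    (fun m => mul_inv_cancel_left₀ (by positivity) _)
    (rSeq_lt_one hD0.le hD.le hk2 hε0 hε) (mul_rSeq_le_rSeq_succ hD0 hD.le hZ hlam.2.le hk2 hε0 hε)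
    (fun m z hz => (hfattr m z hz).2) (fun m z hz => norm_hBar_le_of_le_rSeq (hch m) hD0 hZ hz)
    (fun m X Y hX hY => ?_) hMest
  exact lam_mul_norm_sub_le_of_rightInverse hC hlam.1 (ha m).1
    (norm_mul_two_rSeq_le (hd m) (norm_nonneg _) hD0 hZ hlam.2.le) (hgb m) (hginv m).2
    ((hfhol m).differentiableOn.differentiableAt (ball_mem_nhds 0 one_pos)) (hf0 m)
    (fun z hz => (hfattr m z hz).1) (htaylor m 1 one_le_two) hX hY

/-- Approximation and boundedness of `φ_{n+m,m}` on the ball `B(0, s_m)`. -/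
theorem phi_approximation
    (fb gb gbinv : ℕ → (ℂ × ℂ) → (ℂ × ℂ)) (a b c d : ℕ → ℂ) (ch : ℕ → Fin 6 → ℂ)
    (C D k ε Z lam M : ℝ)
    (hC : 0 < C) (hCD : C < D) (hD : D < 1)
    (hk2 : 2 < k) (hk : k < 11 / 5) (hDk : D ^ k < C)
    (hε : 0 < ε ∧ ε < min (min ((11 - 5 * k) / 4) ((5 - 2 * k) / 3)) ((3 - k) / 2))
    (hZ : 0 < Z) (hlam : 0 < lam ∧ lam < 1) (hDlam : D ^ k < lam * C)
    -- the maps f̄ₙ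
    (hfhol : ∀ n, AnalyticOn ℂ (fb n) (ball (0 : ℂ × ℂ) 1))
    (hfinj : ∀ n, InjOn (fb n) (ball (0 : ℂ × ℂ) 1))
    (hf0 : ∀ n, fb n 0 = 0)
    (hfattr : ∀ n, ∀ z : ℂ × ℂ, ‖z‖ < 1 → C * ‖z‖ ≤ ‖fb n z‖ ∧ ‖fb n z‖ ≤ D * ‖z‖)
    -- the coefficients of gₙ
    (ha : ∀ n, C ≤ ‖a n‖ ∧ ‖a n‖ ≤ D)
    (hb : ∀ n, C ≤ ‖b n‖ ∧ ‖b n‖ ≤ D)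
    (hc : ∀ n, ‖c n‖ ≤ D)
    (hd : ∀ n, ‖d n‖ ≤ Z * D ^ (-(2 * (n : ℝ)) * (k - 2 + ε)))
    -- ḡₙ is gₙ or gₙ composed with a unitary matrix
    (hgb : ∀ n, gb n = gMap (a n) (b n) (c n) (d n) ∨
      ∃ Mu : (ℂ × ℂ) ≃ₗᵢ[ℂ] (ℂ × ℂ), gb n = gMap (a n) (b n) (c n) (d n) ∘ Mu)
    -- ḡₙ⁻¹ is a two-sided inverse of ḡₙ
    (hginv : ∀ n, Function.LeftInverse (gbinv n) (gb n) ∧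
      Function.RightInverse (gbinv n) (gb n))
    -- the quadratic coefficients of h̄ₙ
    (hch : ∀ n, ∀ i, ‖ch n i‖ ≤ Z * D ^ (-(2 * (n : ℝ)) * (k - 2 + ε)))
    -- the degree-2 Taylor polynomials of ḡₙ∘h̄ₙ and h̄ₙ₊₁∘f̄ₙ coincide at 0
    (htaylor : ∀ n, ∀ i : ℕ, i ≤ 2 →
      iteratedFDeriv ℂ i (gb n ∘ hBar ch n) 0 =
        iteratedFDeriv ℂ i (hBar ch (n + 1) ∘ fb n) 0)
    -- M is the one-step comparison constant
    (hM : 0 < M)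
    (hMest : ∀ n, ∀ z : ℂ × ℂ, ‖z‖ ≤ rSeq C D k ε Z lam n →
      ‖hBar ch n z - gbinv n (hBar ch (n + 1) (fb n z))‖ ≤ M * ‖z‖ ^ k) :
    ∀ m n : ℕ, ∀ w : ℂ × ℂ, ‖w‖ ≤ sSeq C D k ε Z lam M m →
      ‖phiMap gbinv ch fb (n + m) m w - hBar ch m w‖
          ≤ M / (1 - D ^ k / (lam * C)) * ‖w‖ ^ k ∧
      ‖phiMap gbinv ch fb (n + m) m w‖
          ≤ (M / (1 - D ^ k / (lam * C)) + 2) * ‖w‖ :=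
  phi_approximation_general fb gb gbinv a b c d ch C D k ε Z lam M hC hCD hD hk2 hε hZ hlam hDlam
    hfhol hf0 hfattr ha hd hgb hginv hch htaylor hM hMest
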